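/- For every parameter vector θ of the original network and every input x ∈ ℝ^n, the enlarged network obtained by the β embedding computes exactly the same input–output map: f̂_r(x, β_{ζs}(θ)) = f_r(x, θ) for all r = 1,…,m and arbitrary ζ_k ∈ ℝ, s_{jk} ∈ ℝ. -/

import Mathlib

/-- Parameters of a fully connected feedforward network: `w ℓ j i` is the weight from
unit `i` of layer `ℓ-1` to unit `j` of layer `ℓ`, and `b ℓ j` is the bias of unit `j`
of layer `ℓ`.  Layers are numbered `1, …, L` (layer `0` is the input); units within a
layer are numbered from `0`, so layer `ℓ` consists of the units `0, …, H ℓ - 1`. -/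
structure NNParams where
  w : ℕ → ℕ → ℕ → ℝ
  b : ℕ → ℕ → ℝ

/-- `layerOut g H θ x ℓ i` : the output of unit `i` of layer `ℓ` on input `x`
(`layerOut g H θ x 0 = x`, and for `ℓ ≥ 1` it is `g` applied to the pre-activation). -/
noncomputable def layerOut (g : ℝ → ℝ) (H : ℕ → ℕ) (θ : NNParams) (x : ℕ → ℝ) :
    ℕ → ℕ → ℝ
  | 0, i => x i
  | ℓ + 1, i =>
      g (∑ j ∈ Finset.range (H ℓ), θ.w (ℓ + 1) i j * layerOut g H θ x ℓ j + θ.b (ℓ + 1) i)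

/-- Pre-activation `a_j^ℓ(x, θ)` of unit `j` of layer `ℓ ≥ 1`:
`a_j^ℓ = ∑_{i < H (ℓ-1)} w_{ji}^ℓ · (output of unit i of layer ℓ-1) + σ_j^ℓ`.
The outputs of the last layer `L` are `f_r(x,θ) = preact g H θ x L r` (linear output units). -/
noncomputable def preact (g : ℝ → ℝ) (H : ℕ → ℕ) (θ : NNParams) (x : ℕ → ℝ)
    (ℓ j : ℕ) : ℝ :=
  ∑ i ∈ Finset.range (H (ℓ - 1)), θ.w ℓ j i * layerOut g H θ x (ℓ - 1) i + θ.b ℓ j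

/-- Empirical risk `R_emp(θ) = (1/P) ∑_{p<P} ℒ(y^p, f(x^p, θ))`, where the network has
`L` layers with layer sizes given by `H`, the training inputs are `X p` and the labels
`Y p`, and `m` is the output dimension seen by the loss. -/
noncomputable def Remp (g : ℝ → ℝ) (H : ℕ → ℕ) (L P : ℕ) {m : ℕ}
    (X Y : ℕ → ℕ → ℝ) (loss : (ℕ → ℝ) → (Fin m → ℝ) → ℝ) (θ : NNParams) : ℝ :=
  (1 / (P : ℝ)) * ∑ p ∈ Finset.range P,
    loss (Y p) (fun r => preact g H θ (X p) L r)

/-- Layer sizes of the network enlarged by adding `K` new neurons to layer `l`. -/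
def enlargeH (H : ℕ → ℕ) (l K : ℕ) : ℕ → ℕ :=
  fun ℓ => if ℓ = l then H l + K else H ℓ

/-- The embedding `α_{ζv}` : copy all parameters, give the `k`-th new neuron of layer `l`
(`k = 0, …, K-1`, i.e. unit `H l + k`) the bias `ζ k` and incoming weights `v k`, and
set all weights from the new neurons to layer `l+1` to zero. -/
noncomputable def alphaEmb (H : ℕ → ℕ) (l K : ℕ) (ζ : ℕ → ℝ) (v : ℕ → ℕ → ℝ)
    (θ : NNParams) : NNParams where
  w := fun ℓ j i =>
    if ℓ = l ∧ H l ≤ j then v (j - H l) i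
    else if ℓ = l + 1 ∧ H l ≤ i then 0
    else θ.w ℓ j i
  b := fun ℓ j => if ℓ = l ∧ H l ≤ j then ζ (j - H l) else θ.b ℓ j

/-- The embedding `β_{ζs}` : copy all parameters except the biases of layer `l+1`, give
the `k`-th new neuron of layer `l` the bias `ζ k` and zero incoming weights, set the
outgoing weight from the `k`-th new neuron to unit `j` of layer `l+1` to `s j k`, and
replace the bias of unit `j` of layer `l+1` by `σ_j - ∑_{k<K} s j k · g (ζ k)`. -/
noncomputable def betaEmb (g : ℝ → ℝ) (H : ℕ → ℕ) (l K : ℕ) (ζ : ℕ → ℝ)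
    (s : ℕ → ℕ → ℝ) (θ : NNParams) : NNParams where
  w := fun ℓ j i =>
    if ℓ = l ∧ H l ≤ j then 0
    else if ℓ = l + 1 ∧ H l ≤ i then s j (i - H l)
    else θ.w ℓ j i
  b := fun ℓ j =>
    if ℓ = l ∧ H l ≤ j then ζ (j - H l)
    else if ℓ = l + 1 then θ.b (l + 1) j - ∑ k ∈ Finset.range K, s j k * g (ζ k)
    else θ.b ℓ j

/-- The embedding `γ_λ` : duplicate unit `h` of layer `l` into each of the `K` new
neurons (same bias and incoming weights as unit `h`), and split the outgoing weights:
unit `h` keeps `lam 0 · w_{jh}^{l+1}` and the `k`-th new neuron (`k = 0, …, K-1`,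
i.e. unit `H l + k`, corresponding to `λ_{k+1}` of the paper) gets
`lam (k+1) · w_{jh}^{l+1}`; all other parameters are copied. -/
noncomputable def gammaEmb (H : ℕ → ℕ) (l K : ℕ) (h : ℕ) (lam : ℕ → ℝ)
    (θ : NNParams) : NNParams where
  w := fun ℓ j i =>
    if ℓ = l ∧ H l ≤ j then θ.w l h i
    else if ℓ = l + 1 ∧ i = h then lam 0 * θ.w (l + 1) j h
    else if ℓ = l + 1 ∧ H l ≤ i then lam (i - H l + 1) * θ.w (l + 1) j h
    else θ.w ℓ j i
  b := fun ℓ j => if ℓ = l ∧ H l ≤ j then θ.b l h else θ.b ℓ j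

/-- `θ` with the single weight `w ℓ j i` replaced by `t`. -/
noncomputable def updW (θ : NNParams) (ℓ j i : ℕ) (t : ℝ) : NNParams :=
  ⟨fun ℓ' j' i' => if ℓ' = ℓ ∧ j' = j ∧ i' = i then t else θ.w ℓ' j' i', θ.b⟩

/-- `θ` with the single bias `b ℓ j` replaced by `t`. -/
noncomputable def updB (θ : NNParams) (ℓ j : ℕ) (t : ℝ) : NNParams :=
  ⟨θ.w, fun ℓ' j' => if ℓ' = ℓ ∧ j' = j then t else θ.b ℓ' j'⟩

/-- `∇ R_emp(θ) = 0` : every partial derivative of the empirical risk with respect to an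
actual network parameter (a weight `w ℓ j i` or a bias `b ℓ j`, `1 ≤ ℓ ≤ L`, `j < H ℓ`,
`i < H (ℓ-1)`) vanishes at `θ`. -/
def IsCritical (g : ℝ → ℝ) (H : ℕ → ℕ) (L P : ℕ) {m : ℕ}
    (X Y : ℕ → ℕ → ℝ) (loss : (ℕ → ℝ) → (Fin m → ℝ) → ℝ) (θ : NNParams) : Prop :=
  (∀ ℓ j i, 1 ≤ ℓ → ℓ ≤ L → j < H ℓ → i < H (ℓ - 1) →
      deriv (fun t => Remp g H L P X Y loss (updW θ ℓ j i t)) (θ.w ℓ j i) = 0) ∧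
  ∀ ℓ j, 1 ≤ ℓ → ℓ ≤ L → j < H ℓ →
      deriv (fun t => Remp g H L P X Y loss (updB θ ℓ j t)) (θ.b ℓ j) = 0

/-- Layer sizes after enlarging layer `p.1` by `p.2` neurons for each pair in the list. -/
def multiEnlargeH : (ℕ → ℕ) → List (ℕ × ℕ) → (ℕ → ℕ)
  | H, [] => H
  | H, (l, K) :: rest => multiEnlargeH (enlargeH H l K) rest

/-- Composition of `α` embeddings: for each `(l, K)` in the list (in order), add `K` new
neurons to layer `l` via `α` with biases `ζ l` and incoming weights `v l`. -/
noncomputable def multiAlpha (ζ : ℕ → ℕ → ℝ) (v : ℕ → ℕ → ℕ → ℝ) :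
    (ℕ → ℕ) → List (ℕ × ℕ) → NNParams → NNParams
  | _, [], θ => θ
  | H, (l, K) :: rest, θ =>
      multiAlpha ζ v (enlargeH H l K) rest (alphaEmb H l K (ζ l) (v l) θ)

noncomputable def multiBeta (g : ℝ → ℝ) (ζ : ℕ → ℕ → ℝ) (s : ℕ → ℕ → ℕ → ℝ) :
    (ℕ → ℕ) → List (ℕ × ℕ) → NNParams → NNParams
  | _, [], θ => θ
  | H, (l, K) :: rest, θ =>
      multiBeta g ζ s (enlargeH H l K) rest (betaEmb g H l K (ζ l) (s l) θ)

noncomputable def multiGamma (hsel : ℕ → ℕ) (lam : ℕ → ℕ → ℝ) :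
    (ℕ → ℕ) → List (ℕ × ℕ) → NNParams → NNParams
  | _, [], θ => θ
  | H, (l, K) :: rest, θ =>
      multiGamma hsel lam (enlargeH H l K) rest (gammaEmb H l K (hsel l) (lam l) θ)

/-- A single enlargement step: either a `β` embedding with zero outgoing weights, or a
`γ` embedding. -/
inductive EmbStep where
  | beta (l K : ℕ) (ζ : ℕ → ℝ)
  | gamma (l K : ℕ) (h : ℕ) (lam : ℕ → ℝ)

def EmbStep.layer : EmbStep → ℕ
  | .beta l _ _ => l
  | .gamma l _ _ _ => l

def EmbStep.count : EmbStep → ℕ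
  | .beta _ K _ => K
  | .gamma _ K _ _ => K

noncomputable def EmbStep.apply (g : ℝ → ℝ) (H : ℕ → ℕ) (θ : NNParams) : EmbStep → NNParams
  | .beta l K ζ => betaEmb g H l K ζ (fun _ _ => 0) θ
  | .gamma l K h lam => gammaEmb H l K h lam θ

def EmbStep.OK (H : ℕ → ℕ) (L : ℕ) : EmbStep → Prop
  | .beta l _ _ => 1 ≤ l ∧ l + 1 ≤ L
  | .gamma l K h lam => 1 ≤ l ∧ l + 1 ≤ L ∧ h < H l ∧ ∑ i ∈ Finset.range (K + 1), lam i = 1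

noncomputable def applySteps (g : ℝ → ℝ) : (ℕ → ℕ) → List EmbStep → NNParams → NNParams
  | _, [], θ => θ
  | H, st :: rest, θ =>
      applySteps g (enlargeH H st.layer st.count) rest (EmbStep.apply g H θ st)

def stepsH : (ℕ → ℕ) → List EmbStep → (ℕ → ℕ)
  | H, [] => H
  | H, st :: rest => stepsH (enlargeH H st.layer st.count) rest

/-! The new neurons of `β_{ζs}` have zero incoming weights, so neuron `k` outputs the constant
`g (ζ k)` and contributes exactly `∑_k s_{jk} g(ζ_k)` to the pre-activation of unit `j` of
layer `l+1`; the shifted bias cancels this contribution. All other parameters are copied, so an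
induction over the layers shows that every old unit computes the same value. -/

section Congr

variable {g : ℝ → ℝ} {H H' : ℕ → ℕ} {θ θ' : NNParams} {x : ℕ → ℝ}

theorem layerOut_succ (ℓ i : ℕ) :
    layerOut g H θ x (ℓ + 1) i = g (preact g H θ x (ℓ + 1) i) :=
  rfl

theorem preact_congr {ℓ j : ℕ} (hH : H' (ℓ - 1) = H (ℓ - 1))
    (hw : ∀ i < H (ℓ - 1), θ'.w ℓ j i = θ.w ℓ j i)
    (hout : ∀ i < H (ℓ - 1), layerOut g H' θ' x (ℓ - 1) i = layerOut g H θ x (ℓ - 1) i)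
    (hb : θ'.b ℓ j = θ.b ℓ j) :
    preact g H' θ' x ℓ j = preact g H θ x ℓ j := by
  unfold preact
  rw [hH, hb]
  congr 1
  refine Finset.sum_congr rfl fun i hi => ?_
  rw [Finset.mem_range] at hi
  rw [hw i hi, hout i hi]

end Congr

theorem enlargeH_self (H : ℕ → ℕ) (l K : ℕ) : enlargeH H l K l = H l + K :=
  if_pos rfl

theorem enlargeH_of_ne (H : ℕ → ℕ) {l ℓ : ℕ} (K : ℕ) (h : ℓ ≠ l) :
    enlargeH H l K ℓ = H ℓ :=
  if_neg h

namespace betaEmb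

variable {g : ℝ → ℝ} {H : ℕ → ℕ} {l K : ℕ} {ζ : ℕ → ℝ} {s : ℕ → ℕ → ℝ} {θ : NNParams}
  {x : ℕ → ℝ}

theorem w_eq {ℓ j i : ℕ} (hj : ℓ = l → j < H l) (hi : ℓ = l + 1 → i < H l) :
    (betaEmb g H l K ζ s θ).w ℓ j i = θ.w ℓ j i := by
  simp only [betaEmb]
  grind

theorem b_eq {ℓ j : ℕ} (hj : ℓ = l → j < H l) (hℓ : ℓ ≠ l + 1) :
    (betaEmb g H l K ζ s θ).b ℓ j = θ.b ℓ j := by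
  simp only [betaEmb]
  grind

theorem w_new (k i : ℕ) : (betaEmb g H l K ζ s θ).w l (H l + k) i = 0 := by
  simp [betaEmb]

theorem b_new (k : ℕ) : (betaEmb g H l K ζ s θ).b l (H l + k) = ζ k := by
  simp [betaEmb]

theorem w_succ_new (j k : ℕ) : (betaEmb g H l K ζ s θ).w (l + 1) j (H l + k) = s j k := by
  simp [betaEmb]

theorem b_succ (j : ℕ) :
    (betaEmb g H l K ζ s θ).b (l + 1) j =
      θ.b (l + 1) j - ∑ k ∈ Finset.range K, s j k * g (ζ k) := by
  simp [betaEmb]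

theorem layerOut_new (hl : 1 ≤ l) (k : ℕ) :
    layerOut g (enlargeH H l K) (betaEmb g H l K ζ s θ) x l (H l + k) = g (ζ k) := by
  obtain ⟨l, rfl⟩ := Nat.exists_eq_add_of_le' hl
  simp [layerOut_succ, preact, w_new, b_new]

theorem preact_succ (hl : 1 ≤ l) (j : ℕ)
    (hout : ∀ i < H l,
      layerOut g (enlargeH H l K) (betaEmb g H l K ζ s θ) x l i = layerOut g H θ x l i) :
    preact g (enlargeH H l K) (betaEmb g H l K ζ s θ) x (l + 1) j =
      preact g H θ x (l + 1) j := by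
  have hold : ∀ i ∈ Finset.range (H l),
      (betaEmb g H l K ζ s θ).w (l + 1) j i *
          layerOut g (enlargeH H l K) (betaEmb g H l K ζ s θ) x l i =
        θ.w (l + 1) j i * layerOut g H θ x l i := by
    intro i hi
    rw [Finset.mem_range] at hi
    rw [w_eq (by omega) fun _ => hi, hout i hi]
  have hnew : ∀ k ∈ Finset.range K,
      (betaEmb g H l K ζ s θ).w (l + 1) j (H l + k) *
          layerOut g (enlargeH H l K) (betaEmb g H l K ζ s θ) x l (H l + k) =
        s j k * g (ζ k) := by
    intro k _
    rw [w_succ_new, layerOut_new hl]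
  simp only [preact, Nat.add_sub_cancel, enlargeH_self, Finset.sum_range_add,
    Finset.sum_congr rfl hold, Finset.sum_congr rfl hnew, b_succ]
  ring

theorem preact_eq (hl : 1 ≤ l) {ℓ j : ℕ} (hj : j < H ℓ)
    (hout : ∀ i < H (ℓ - 1),
      layerOut g (enlargeH H l K) (betaEmb g H l K ζ s θ) x (ℓ - 1) i =
        layerOut g H θ x (ℓ - 1) i) :
    preact g (enlargeH H l K) (betaEmb g H l K ζ s θ) x ℓ j = preact g H θ x ℓ j := by
  by_cases hℓ : ℓ = l + 1
  · subst hℓ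
    exact preact_succ hl j hout
  · have hne : ℓ - 1 ≠ l := by omega
    exact preact_congr (enlargeH_of_ne H K hne)
      (fun _ _ => w_eq (fun h => h ▸ hj) (by omega)) hout (b_eq (fun h => h ▸ hj) hℓ)

theorem layerOut_eq (hl : 1 ≤ l) (ℓ : ℕ) :
    ∀ i < H ℓ,
      layerOut g (enlargeH H l K) (betaEmb g H l K ζ s θ) x ℓ i = layerOut g H θ x ℓ i := by
  induction ℓ with
  | zero => exact fun _ _ => rfl
  | succ ℓ ih => exact fun i hi => congrArg g (preact_eq hl hi ih)

end betaEmb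

theorem betaEmb_preserves_output_general
    (g : ℝ → ℝ) (H : ℕ → ℕ) (L : ℕ)
    (l : ℕ) (hl1 : 1 ≤ l) (K : ℕ)
    (ζ : ℕ → ℝ) (s : ℕ → ℕ → ℝ) (θ : NNParams) (x : ℕ → ℝ) :
    ∀ r, r < H L →
      preact g (enlargeH H l K) (betaEmb g H l K ζ s θ) x L r = preact g H θ x L r :=
  fun _ hr => betaEmb.preact_eq hl1 hr (betaEmb.layerOut_eq hl1 _)

/-- For every parameter vector `θ` and every input `x`, the network
enlarged by the `β` embedding computes exactly the same input–output map:
`f̂_r(x, β_{ζs}(θ)) = f_r(x, θ)` for all outputs `r < m = H L`. -/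
theorem betaEmb_preserves_output
    (g : ℝ → ℝ) (H : ℕ → ℕ) (L : ℕ)
    (l : ℕ) (hl1 : 1 ≤ l) (hlL : l + 1 ≤ L) (K : ℕ)
    (ζ : ℕ → ℝ) (s : ℕ → ℕ → ℝ) (θ : NNParams) (x : ℕ → ℝ) :
    ∀ r, r < H L →
      preact g (enlargeH H l K) (betaEmb g H l K ζ s θ) x L r = preact g H θ x L r :=
  betaEmb_preserves_output_general g H L l hl1 K ζ s θ x
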